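/- For an integrable random variable Z and α ∈ (0,1), the function θ ↦ E[θ + α⁻¹·max(Z − θ, 0)] is convex on ℝ, and the (1−α)-quantile θ̄ of Z (i.e., any θ̄ with P(Z < θ̄) ≤ 1−α ≤ P(Z ≤ θ̄)) attains the infimum defining AV@R_α(Z). -/

import Mathlib

open MeasureTheory

noncomputable def avar {Ω : Type*} [MeasurableSpace Ω] (μ : Measure Ω) (α : ℝ)
    (Z : Ω → ℝ) : ℝ :=
  sInf (Set.range fun θ : ℝ => ∫ ω, (θ + α⁻¹ * max (Z ω - θ) 0) ∂μ)

theorem stmt6 {Ω : Type*} [MeasurableSpace Ω] (μ : Measure Ω) [IsProbabilityMeasure μ]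
    (α : ℝ) (hα : α ∈ Set.Ioo (0 : ℝ) 1)
    (Z : Ω → ℝ) (hZm : Measurable Z) (hZ : Integrable Z μ) :
    ConvexOn ℝ Set.univ (fun θ : ℝ => ∫ ω, (θ + α⁻¹ * max (Z ω - θ) 0) ∂μ) ∧
    ∀ q : ℝ, (μ {ω | Z ω < q}).toReal ≤ 1 - α → 1 - α ≤ (μ {ω | Z ω ≤ q}).toReal →
      (∫ ω, (q + α⁻¹ * max (Z ω - q) 0) ∂μ) = avar μ α Z := by
  obtain ⟨hα0, hα1⟩ := hα
  have hαinv : (0:ℝ) ≤ α⁻¹ := inv_nonneg.2 hα0.le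
  have hint : ∀ θ : ℝ, Integrable (fun ω => max (Z ω - θ) 0) μ := fun θ =>
    (hZ.sub (integrable_const θ)).pos_part
  have hgθ : ∀ θ : ℝ, (∫ ω, (θ + α⁻¹ * max (Z ω - θ) 0) ∂μ)
      = θ + α⁻¹ * ∫ ω, max (Z ω - θ) 0 ∂μ := by
    intro θ
    rw [integral_add (integrable_const θ) ((hint θ).const_mul _), integral_const,
      integral_const_mul]
    simp
  constructor
  · refine ⟨convex_univ, ?_⟩
    intro x _ y _ a b ha hb hab
    simp only [smul_eq_mul]
    rw [hgθ, hgθ, hgθ]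
    have key : ∫ ω, max (Z ω - (a*x + b*y)) 0 ∂μ
        ≤ a * ∫ ω, max (Z ω - x) 0 ∂μ + b * ∫ ω, max (Z ω - y) 0 ∂μ := by
      rw [← integral_const_mul, ← integral_const_mul,
        ← integral_add ((hint x).const_mul a) ((hint y).const_mul b)]
      refine integral_mono (hint _) (((hint x).const_mul a).add ((hint y).const_mul b)) ?_
      intro ω
      have hzeq : Z ω - (a*x + b*y) = a*(Z ω - x) + b*(Z ω - y) := by
        linear_combination (-Z ω) * hab
      simp only
      rw [hzeq]
      refine max_le ?_ ?_
      · have h1 : Z ω - x ≤ max (Z ω - x) 0 := le_max_left _ _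
        have h2 : Z ω - y ≤ max (Z ω - y) 0 := le_max_left _ _
        nlinarith
      · have h1 : (0:ℝ) ≤ max (Z ω - x) 0 := le_max_right _ _
        have h2 : (0:ℝ) ≤ max (Z ω - y) 0 := le_max_right _ _
        nlinarith
    have h2 := mul_le_mul_of_nonneg_left key hαinv
    nlinarith [h2]
  · intro q hq1 hq2
    have hlow : ∀ θ : ℝ, (∫ ω, (q + α⁻¹ * max (Z ω - q) 0) ∂μ)
        ≤ ∫ ω, (θ + α⁻¹ * max (Z ω - θ) 0) ∂μ := by
      intro θ
      rw [hgθ, hgθ]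
      rcases le_total q θ with hle | hle
      · -- θ ≥ q case, use S = {ω | q < Z ω}
        set S : Set Ω := {ω | q < Z ω} with hS
        have hSm : MeasurableSet S := measurableSet_lt measurable_const hZm
        have hScompl : Sᶜ = {ω | Z ω ≤ q} := by
          ext ω; simp [hS, not_lt]
        have hmeas : (μ S).toReal ≤ α := by
          have hadd : (μ S).toReal + (μ Sᶜ).toReal = 1 := by
            rw [← ENNReal.toReal_add (measure_ne_top μ _) (measure_ne_top μ _),
              measure_add_measure_compl hSm, measure_univ, ENNReal.toReal_one]
          rw [hScompl] at hadd
          linarith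
        have hpt : ∀ ω, max (Z ω - q) 0 - S.indicator (fun _ => θ - q) ω
            ≤ max (Z ω - θ) 0 := by
          intro ω
          rcases lt_or_ge q (Z ω) with h | h
          · rw [Set.indicator_of_mem (show ω ∈ S from h)]
            rcases le_total (Z ω) θ with h' | h'
            · have : max (Z ω - q) 0 = Z ω - q := max_eq_left (by linarith)
              rw [this]
              have : (0:ℝ) ≤ max (Z ω - θ) 0 := le_max_right _ _
              linarith
            · rw [max_eq_left (by linarith : (0:ℝ) ≤ Z ω - q),
                max_eq_left (by linarith : (0:ℝ) ≤ Z ω - θ)]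
              linarith
          · rw [Set.indicator_of_notMem (by simpa [hS] using not_lt.2 h)]
            rw [max_eq_right (by linarith : Z ω - q ≤ 0)]
            have : (0:ℝ) ≤ max (Z ω - θ) 0 := le_max_right _ _
            linarith
        have hindint : Integrable (S.indicator (fun _ => θ - q)) μ :=
          (integrable_const (θ - q)).indicator hSm
        have hmono : (∫ ω, (max (Z ω - q) 0 - S.indicator (fun _ => θ - q) ω) ∂μ)
            ≤ ∫ ω, max (Z ω - θ) 0 ∂μ :=
          integral_mono ((hint q).sub hindint) (hint θ) hpt
        rw [integral_sub (hint q) hindint, integral_indicator_const _ hSm] at hmono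
        have hineq : (∫ ω, max (Z ω - q) 0 ∂μ) - (μ S).toReal * (θ - q)
            ≤ ∫ ω, max (Z ω - θ) 0 ∂μ := by
          simpa [smul_eq_mul, measureReal_def] using hmono
        have hαS : α⁻¹ * (μ S).toReal ≤ 1 := by
          rw [← inv_mul_cancel₀ hα0.ne']
          exact mul_le_mul_of_nonneg_left hmeas hαinv
        have hm := mul_le_mul_of_nonneg_left hineq hαinv
        nlinarith [mul_le_mul_of_nonneg_right hαS (by linarith : (0:ℝ) ≤ θ - q)]
      · -- θ ≤ q case, use T = {ω | q ≤ Z ω}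
        set T : Set Ω := {ω | q ≤ Z ω} with hT
        have hTm : MeasurableSet T := measurableSet_le measurable_const hZm
        have hTcompl : Tᶜ = {ω | Z ω < q} := by
          ext ω; simp [hT, not_le]
        have hmeas : α ≤ (μ T).toReal := by
          have hadd : (μ T).toReal + (μ Tᶜ).toReal = 1 := by
            rw [← ENNReal.toReal_add (measure_ne_top μ _) (measure_ne_top μ _),
              measure_add_measure_compl hTm, measure_univ, ENNReal.toReal_one]
          rw [hTcompl] at hadd
          linarith
        have hpt : ∀ ω, max (Z ω - q) 0 + T.indicator (fun _ => q - θ) ω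
            ≤ max (Z ω - θ) 0 := by
          intro ω
          rcases le_or_gt q (Z ω) with h | h
          · rw [Set.indicator_of_mem (show ω ∈ T from h),
              max_eq_left (by linarith : (0:ℝ) ≤ Z ω - q),
              max_eq_left (by linarith : (0:ℝ) ≤ Z ω - θ)]
            linarith
          · rw [Set.indicator_of_notMem (by simpa [hT] using not_le.2 h),
              max_eq_right (by linarith : Z ω - q ≤ 0)]
            have : Z ω - θ ≤ max (Z ω - θ) 0 := le_max_left _ _
            have : (0:ℝ) ≤ max (Z ω - θ) 0 := le_max_right _ _
            linarith
        have hindint : Integrable (T.indicator (fun _ => q - θ)) μ :=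
          (integrable_const (q - θ)).indicator hTm
        have hmono : (∫ ω, (max (Z ω - q) 0 + T.indicator (fun _ => q - θ) ω) ∂μ)
            ≤ ∫ ω, max (Z ω - θ) 0 ∂μ :=
          integral_mono ((hint q).add hindint) (hint θ) hpt
        rw [integral_add (hint q) hindint, integral_indicator_const _ hTm] at hmono
        have hineq : (∫ ω, max (Z ω - q) 0 ∂μ) + (μ T).toReal * (q - θ)
            ≤ ∫ ω, max (Z ω - θ) 0 ∂μ := by
          simpa [smul_eq_mul, measureReal_def] using hmono
        have hαT : 1 ≤ α⁻¹ * (μ T).toReal := by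
          rw [← inv_mul_cancel₀ hα0.ne']
          exact mul_le_mul_of_nonneg_left hmeas hαinv
        have hm := mul_le_mul_of_nonneg_left hineq hαinv
        nlinarith [mul_le_mul_of_nonneg_right hαT (by linarith : (0:ℝ) ≤ q - θ)]
    have hleast : IsLeast (Set.range fun θ : ℝ => ∫ ω, (θ + α⁻¹ * max (Z ω - θ) 0) ∂μ)
        (∫ ω, (q + α⁻¹ * max (Z ω - q) 0) ∂μ) := by
      refine ⟨⟨q, rfl⟩, ?_⟩
      rintro x ⟨θ, rfl⟩
      exact hlow θ
    rw [avar]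
    exact hleast.csInf_eq.symm
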